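/- With notation as above, ‖X − D_y‖_F² ≥ ‖D_x − D_y‖_F², where D_x is the diagonal matrix of singular values of X and D_y is a diagonal matrix with nonincreasing nonnegative entries. -/

import Mathlib

open Matrix

/-- Rectangular diagonal matrix built from a vector of length `m` (with `m ≤ n`). -/
def diagMN (m n : ℕ) (σ : Fin m → ℝ) : Matrix (Fin m) (Fin n) ℝ :=
  Matrix.of fun (i : Fin m) (j : Fin n) => if (i : ℕ) = (j : ℕ) then σ i else 0

/-- Squared Frobenius norm. -/
def frobSq (m n : ℕ) (M : Matrix (Fin m) (Fin n) ℝ) : ℝ :=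
  ∑ i : Fin m, ∑ j : Fin n, (M i j) ^ 2

/-!
Expanding both squares and using `‖U D_x Vᵀ‖_F = ‖D_x‖_F` reduces the claim to
`⟨U D_x Vᵀ, D_y⟩ ≤ ⟨D_x, D_y⟩`. The left side is `∑ i k, σ i * σx k * U i k * V i k`, and
`U i k * V i k ≤ (U i k ^ 2 + V i k ^ 2) / 2`. Squaring the entries of an orthogonal matrix gives a
doubly stochastic matrix, i.e. (Birkhoff) a convex combination of permutation matrices, so the
rearrangement inequality bounds each half by `∑ i, σ i * σx i`. Only an `m × m` corner of `V`
occurs; extending `σ` and `σx` by zero to `Fin n` keeps them nonincreasing since they are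
nonnegative.
-/

open Finset

theorem Monovary.dotProduct_mulVec_le_of_mem_doublyStochastic {R ι : Type*} [Field R]
    [LinearOrder R] [IsStrictOrderedRing R] [Fintype ι] [DecidableEq ι] {a b : ι → R}
    (hab : Monovary a b) {P : Matrix ι ι R} (hP : P ∈ doublyStochastic R ι) :
    a ⬝ᵥ (P *ᵥ b) ≤ a ⬝ᵥ b := by
  obtain ⟨w, hw0, hw1, rfl⟩ := exists_eq_sum_perm_of_mem_doublyStochastic hP
  calc a ⬝ᵥ ((∑ σ, w σ • σ.permMatrix R) *ᵥ b)
      = ∑ σ, w σ * (a ⬝ᵥ (b ∘ σ)) := by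
        simp only [Matrix.sum_mulVec, smul_mulVec, permMatrix_mulVec, dotProduct_sum,
          dotProduct_smul, smul_eq_mul]
    _ ≤ ∑ σ, w σ * (a ⬝ᵥ b) := by
        gcongr with σ
        · exact hw0 σ
        · exact hab.sum_mul_comp_perm_le_sum_mul
    _ = a ⬝ᵥ b := by rw [← sum_mul, hw1, one_mul]

theorem Matrix.map_sq_mem_doublyStochastic {n : Type*} [Fintype n] [DecidableEq n]
    {U : Matrix n n ℝ} (hU : U ∈ orthogonalGroup n ℝ) :
    U.map (· ^ 2) ∈ doublyStochastic ℝ n := by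
  refine mem_doublyStochastic_iff_sum.2 ⟨fun i j => sq_nonneg _, fun i => ?_, fun j => ?_⟩
  · simpa [mul_apply, one_apply, sq] using congrFun₂ ((mem_orthogonalGroup_iff n ℝ).1 hU) i i
  · simpa [mul_apply, one_apply, sq] using congrFun₂ ((mem_orthogonalGroup_iff' n ℝ).1 hU) j j

theorem Matrix.two_mul_dotProduct_hadamard_mulVec_le {m n R : Type*} [Fintype m] [Fintype n]
    [CommRing R] [LinearOrder R] [IsStrictOrderedRing R]
    {a : m → R} {b : n → R} (ha : 0 ≤ a) (hb : 0 ≤ b) (A B : Matrix m n R) :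
    2 * (a ⬝ᵥ ((A ⊙ B) *ᵥ b)) ≤ a ⬝ᵥ (A.map (· ^ 2) *ᵥ b) + a ⬝ᵥ (B.map (· ^ 2) *ᵥ b) := by
  simp only [dotProduct, mulVec, mul_sum, ← sum_add_distrib]
  gcongr with i _ k _
  simp only [hadamard_apply, map_apply]
  nlinarith [mul_nonneg (mul_nonneg (ha i) (hb k)) (sq_nonneg (A i k - B i k))]

def extendByZero {α : Type*} [Zero α] {m : ℕ} (a : Fin m → α) (n : ℕ) : Fin n → α :=
  fun j => if h : (j : ℕ) < m then a ⟨j, h⟩ else 0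

section ExtendByZero

variable {α : Type*} {m n : ℕ} (hmn : m ≤ n)

@[simp]
theorem extendByZero_castLE [Zero α] (a : Fin m → α) (i : Fin m) :
    extendByZero a n (Fin.castLE hmn i) = a i := by
  simp [extendByZero]

theorem Antitone.extendByZero [Zero α] [Preorder α] {a : Fin m → α} (ha : Antitone a)
    (ha0 : ∀ i, 0 ≤ a i) : Antitone (extendByZero a n) := by
  intro j l hjl
  unfold _root_.extendByZero
  split_ifs with hl hj hj
  · exact ha (Fin.mk_le_mk.2 hjl)
  · exact absurd ((Fin.le_def.1 hjl).trans_lt hl) hj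
  · exact ha0 _
  · exact le_rfl

variable [NonUnitalNonAssocCommSemiring α]

theorem extendByZero_dotProduct (a : Fin m → α) (g : Fin n → α) :
    extendByZero a n ⬝ᵥ g = a ⬝ᵥ (g ∘ Fin.castLE hmn) := by
  refine (Fintype.sum_of_injective _ (Fin.castLE_injective hmn) _ _ (fun j hj => ?_)
    (fun i => by simp)).symm
  simp_all [extendByZero, Fin.range_castLE]

theorem extendByZero_dotProduct_mulVec (M : Matrix (Fin n) (Fin n) α) (a b : Fin m → α) :
    extendByZero a n ⬝ᵥ (M *ᵥ extendByZero b n) =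
      a ⬝ᵥ (M.submatrix (Fin.castLE hmn) (Fin.castLE hmn) *ᵥ b) := by
  rw [extendByZero_dotProduct hmn]
  congr 1
  ext i
  simp only [Function.comp_apply, mulVec, dotProduct_comm _ (extendByZero b n),
    extendByZero_dotProduct hmn]
  exact dotProduct_comm _ _

end ExtendByZero

def frobInner (m n : ℕ) (M N : Matrix (Fin m) (Fin n) ℝ) : ℝ :=
  ∑ i : Fin m, ∑ j : Fin n, M i j * N i j

section Frobenius

variable {m n : ℕ}

theorem frobSq_sub (M N : Matrix (Fin m) (Fin n) ℝ) :
    frobSq m n (M - N) = frobSq m n M - 2 * frobInner m n M N + frobSq m n N := by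
  simp only [frobSq, frobInner, Matrix.sub_apply, sub_sq, sum_add_distrib, sum_sub_distrib,
    mul_sum, mul_assoc]

theorem frobSq_eq_trace (M : Matrix (Fin m) (Fin n) ℝ) : frobSq m n M = trace (M * Mᵀ) := by
  simp [frobSq, trace, mul_apply, sq]

theorem frobSq_orthogonal_mul_mul_transpose {U : Matrix (Fin m) (Fin m) ℝ}
    {V : Matrix (Fin n) (Fin n) ℝ} (hU : U ∈ orthogonalGroup (Fin m) ℝ)
    (hV : V ∈ orthogonalGroup (Fin n) ℝ) (M : Matrix (Fin m) (Fin n) ℝ) :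
    frobSq m n (U * M * Vᵀ) = frobSq m n M := by
  rw [frobSq_eq_trace, frobSq_eq_trace, transpose_mul, transpose_mul, transpose_transpose]
  simp only [Matrix.mul_assoc]
  rw [← Matrix.mul_assoc Vᵀ, (mem_orthogonalGroup_iff' _ ℝ).1 hV, Matrix.one_mul, trace_mul_comm]
  simp only [Matrix.mul_assoc]
  rw [(mem_orthogonalGroup_iff' _ ℝ).1 hU, Matrix.mul_one]

variable (hmn : m ≤ n)

theorem diagMN_apply (σ : Fin m → ℝ) (i : Fin m) (j : Fin n) :
    diagMN m n σ i j = if Fin.castLE hmn i = j then σ i else 0 := by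
  simp [diagMN, Fin.ext_iff]

theorem diagMN_mul_apply {o : Type*} (σ : Fin m → ℝ) (B : Matrix (Fin n) o ℝ) (i : Fin m)
    (k : o) : (diagMN m n σ * B) i k = σ i * B (Fin.castLE hmn i) k := by
  simp [mul_apply, diagMN_apply hmn, ite_mul]

theorem frobInner_diagMN_right (M : Matrix (Fin m) (Fin n) ℝ) (σ : Fin m → ℝ) :
    frobInner m n M (diagMN m n σ) = ∑ i, M i (Fin.castLE hmn i) * σ i := by
  simp [frobInner, diagMN_apply hmn, mul_ite]

theorem mul_diagMN_mul_transpose_apply_castLE (U : Matrix (Fin m) (Fin m) ℝ)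
    (V : Matrix (Fin n) (Fin n) ℝ) (σ : Fin m → ℝ) (i : Fin m) :
    (U * diagMN m n σ * Vᵀ) i (Fin.castLE hmn i) =
      ((U ⊙ V.submatrix (Fin.castLE hmn) (Fin.castLE hmn)) *ᵥ σ) i := by
  rw [Matrix.mul_assoc, Matrix.mul_apply]
  simp only [diagMN_mul_apply hmn, transpose_apply, mulVec, dotProduct, hadamard_apply,
    submatrix_apply]
  exact sum_congr rfl fun k _ => by ring

end Frobenius

theorem frobInner_orthogonal_mul_diagMN_mul_transpose_le {m n : ℕ} (hmn : m ≤ n)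
    {U : Matrix (Fin m) (Fin m) ℝ} {V : Matrix (Fin n) (Fin n) ℝ}
    (hU : U ∈ orthogonalGroup (Fin m) ℝ) (hV : V ∈ orthogonalGroup (Fin n) ℝ)
    {σx σ : Fin m → ℝ} (hσx0 : ∀ i, 0 ≤ σx i) (hσxdec : Antitone σx) (hσ0 : ∀ i, 0 ≤ σ i) (hσdec : Antitone σ) :
    frobInner m n (U * diagMN m n σx * Vᵀ) (diagMN m n σ) ≤
      frobInner m n (diagMN m n σx) (diagMN m n σ) := by
  set V' := V.submatrix (Fin.castLE hmn) (Fin.castLE hmn)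
  have hU2 : σ ⬝ᵥ (U.map (· ^ 2) *ᵥ σx) ≤ σ ⬝ᵥ σx :=
    (hσdec.monovary hσxdec).dotProduct_mulVec_le_of_mem_doublyStochastic
      (map_sq_mem_doublyStochastic hU)
  have hV2 : σ ⬝ᵥ (V'.map (· ^ 2) *ᵥ σx) ≤ σ ⬝ᵥ σx := by
    have := ((hσdec.extendByZero hσ0).monovary
      (hσxdec.extendByZero hσx0)).dotProduct_mulVec_le_of_mem_doublyStochastic
      (map_sq_mem_doublyStochastic hV)
    rwa [extendByZero_dotProduct_mulVec hmn, extendByZero_dotProduct hmn, submatrix_map,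
      Function.comp_def, funext (extendByZero_castLE hmn σx)] at this
  have hUV := two_mul_dotProduct_hadamard_mulVec_le (a := σ) (b := σx) hσ0 hσx0 U V'
  calc frobInner m n (U * diagMN m n σx * Vᵀ) (diagMN m n σ)
      = σ ⬝ᵥ ((U ⊙ V') *ᵥ σx) := by
        simp only [frobInner_diagMN_right hmn, mul_diagMN_mul_transpose_apply_castLE hmn,
          dotProduct, mul_comm]
        rfl
    _ ≤ σ ⬝ᵥ σx := by linarith
    _ = frobInner m n (diagMN m n σx) (diagMN m n σ) := by
        simp [frobInner_diagMN_right hmn, diagMN_apply hmn, dotProduct, mul_comm]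

theorem frob_dist_ge_diag_dist (m n : ℕ) (hmn : m ≤ n)
    (X : Matrix (Fin m) (Fin n) ℝ)
    (U : Matrix (Fin m) (Fin m) ℝ) (V : Matrix (Fin n) (Fin n) ℝ)
    (hU : U ∈ Matrix.orthogonalGroup (Fin m) ℝ)
    (hV : V ∈ Matrix.orthogonalGroup (Fin n) ℝ)
    (σx : Fin m → ℝ) (hσx0 : ∀ i, 0 ≤ σx i) (hσxdec : Antitone σx)
    (hX : X = U * diagMN m n σx * Vᵀ)
    (σ : Fin m → ℝ) (hσ0 : ∀ i, 0 ≤ σ i) (hσdec : Antitone σ) :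
    frobSq m n (diagMN m n σx - diagMN m n σ) ≤ frobSq m n (X - diagMN m n σ) := by
  subst hX
  rw [frobSq_sub, frobSq_sub, frobSq_orthogonal_mul_mul_transpose hU hV]
  linarith [frobInner_orthogonal_mul_diagMN_mul_transpose_le hmn hU hV hσx0 hσxdec hσ0 hσdec]
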